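/- (Khinchin direction, easy half) If a half-infinite geodesic on a finite polysquare surface P is superdense, then its slope is a badly approximable number. -/

import Mathlib

/-!
Modulo 1 the interval exchange `T` is the rotation by `α`, so the crossing points `y i` project
to an orbit of that rotation on `ℝ/ℤ`. Superdensity at scale `8q` makes the first `8Cq` orbit
points `1/8q`-dense; comparing with a point `1/4q`-far from the first `q` of them forces
`‖q α‖ ≥ 1/(64 C q)` for every `q ≥ 1`. For the convergent denominators `q_n` we also have
`‖q_n α‖ ≤ 1/q_{n+1}`, so `q_{n+1} ≤ 64 C q_n`, and therefore `a_{n+1} ≤ 64 C`.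
-/

/-- `q_k`: the denominators of the continued fraction convergents of `α`. -/
noncomputable def cfq (α : ℝ) (k : ℕ) : ℝ := (GenContFract.of α).dens k

/-- `a_k`: the continued fraction digits (partial quotients) of `α`, for `k ≥ 1`. -/
noncomputable def cfa (α : ℝ) (k : ℕ) : ℝ :=
  ((GenContFract.of α).partDens.get? (k - 1)).getD 0

/-- `‖y‖`: the distance from `y` to the nearest integer. -/
noncomputable def nearestIntDist (y : ℝ) : ℝ := |y - round y|

namespace UnitAddCircle

theorem norm_coe_le_abs_sub_intCast (x : ℝ) (m : ℤ) : ‖(x : UnitAddCircle)‖ ≤ |x - m| :=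
  norm_eq ▸ round_le x m

theorem one_div_le_norm_coe_div {m N : ℕ} (hm : 0 < m) (hmN : m < N) :
    1 / (N : ℝ) ≤ ‖((m / N : ℝ) : UnitAddCircle)‖ := by
  have h := AddCircle.norm_div_natCast (p := 1) (m := m) (n := N)
  rw [mul_one, one_mul, Nat.mod_eq_of_lt hmN] at h
  rw [h]
  gcongr
  exact_mod_cast le_min hm (by omega)

/-- Pigeonhole on the `2q` points `t / 2q`: two of them, at distance `≥ 1/2q`, cannot both be
`1/4q`-close to the same `p v`. -/
theorem exists_forall_le_norm_sub {q : ℕ} (hq : 0 < q) (p : ℕ → UnitAddCircle) :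
    ∃ w : UnitAddCircle, ∀ v < q, 1 / (4 * q : ℝ) ≤ ‖p v - w‖ := by
  by_contra! hnear
  choose V hVq hV using fun t : ℕ => hnear ((t / (2 * q : ℕ) : ℝ) : UnitAddCircle)
  obtain ⟨t, ht, t', ht', hne, heq⟩ := Finset.exists_ne_map_eq_of_card_lt_of_maps_to
    (s := Finset.range (2 * q)) (t := Finset.range q) (by simp; omega)
    (fun t _ => Finset.mem_range.mpr (hVq t))
  wlog hlt : t' < t generalizing t t'
  · exact this t' ht' t ht hne.symm heq.symm (by omega)
  rw [Finset.mem_range] at ht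
  have hfar := one_div_le_norm_coe_div (m := t - t') (by omega) (by omega : t - t' < 2 * q)
  have hclose : ‖(((t - t' : ℕ) / (2 * q : ℕ) : ℝ) : UnitAddCircle)‖ < 1 / (2 * q) :=
    calc _ = ‖(p (V t') - ((t' / (2 * q : ℕ) : ℝ) : UnitAddCircle))
            - (p (V t) - ((t / (2 * q : ℕ) : ℝ) : UnitAddCircle))‖ := by
          rw [heq, sub_sub_sub_cancel_left, ← AddCircle.coe_sub, Nat.cast_sub hlt.le, sub_div]
      _ ≤ _ := norm_sub_le _ _
      _ < 1 / (4 * q) + 1 / (4 * q) := add_lt_add (hV t') (hV t)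
      _ = 1 / (2 * q) := by ring
  push_cast at hfar hclose
  linarith

/-- Write `k = (k / q) q + v` with `v < q` and compare `v β` with a point `w` that is
`1/4q`-far from `0, β, …, (q - 1) β`. -/
theorem one_le_mul_norm_nsmul_of_forall_near (x β : UnitAddCircle) {q : ℕ} (hq : 0 < q) {K : ℝ}
    (hnear : ∀ z, ∃ k : ℕ, (k : ℝ) ≤ K ∧ ‖x + k • β - z‖ ≤ 1 / (8 * q)) :
    1 ≤ 8 * K * ‖q • β‖ := by
  obtain ⟨w, hw⟩ := exists_forall_le_norm_sub hq (fun v => v • β)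
  obtain ⟨k, hkK, hk⟩ := hnear (x + w)
  rw [add_sub_add_left_eq_sub] at hk
  have hdecomp : (k % q) • β - w = (k • β - w) - (k / q) • (q • β) := by
    rw [smul_smul, mul_comm]
    nth_rw 2 [← Nat.mod_add_div k q]
    rw [add_nsmul]
    abel
  have hqpos : (0 : ℝ) < q := by exact_mod_cast hq
  have hquot : ((k / q : ℕ) : ℝ) ≤ K / q := by
    rw [le_div_iff₀ hqpos]
    exact le_trans (by exact_mod_cast Nat.div_mul_le_self k q) hkK
  have hchain : 1 / (4 * q) ≤ 1 / (8 * q) + K / q * ‖q • β‖ :=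
    calc 1 / (4 * q) ≤ ‖(k % q) • β - w‖ := hw _ (Nat.mod_lt _ hq)
      _ ≤ ‖k • β - w‖ + ‖(k / q) • (q • β)‖ := hdecomp ▸ norm_sub_le _ _
      _ ≤ 1 / (8 * q) + (k / q : ℕ) * ‖q • β‖ := add_le_add hk norm_nsmul_le
      _ ≤ 1 / (8 * q) + K / q * ‖q • β‖ := by gcongr
  have h8q : (0 : ℝ) < 8 * q := by positivity
  field_simp at hchain
  nlinarith [norm_nonneg (q • β)]

end UnitAddCircle

open GenContFract (of)

namespace GenContFract

variable {K : Type*} [Field K] [LinearOrder K] [FloorRing K]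

theorem exists_int_pair_eq_contsAux (v : K) (n : ℕ) :
    ∃ p : Pair ℤ, (of v).contsAux n = p.map (↑) := by
  induction n using Nat.strong_induction_on with
  | _ n ih =>
    match n with
    | 0 => exact ⟨⟨1, 0⟩, by simp [contsAux, Pair.map]⟩
    | 1 => exact ⟨⟨⌊v⌋, 1⟩, by simp [contsAux, Pair.map, of_h_eq_floor]⟩
    | n + 2 =>
      obtain ⟨⟨a₁, b₁⟩, hpred⟩ := ih (n + 1) (by omega)
      cases hs : (of v).s.get? n with
      | none => exact ⟨⟨a₁, b₁⟩, (contsAux_stable_of_terminated (by omega) hs).trans hpred⟩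
      | some gp =>
        obtain ⟨⟨a₀, b₀⟩, hppred⟩ := ih n (by omega)
        obtain ⟨ha, z, hz⟩ := of_partNum_eq_one_and_exists_int_partDen_eq hs
        refine ⟨⟨z * a₁ + a₀, z * b₁ + b₀⟩, ?_⟩
        rw [contsAux_recurrence hs hppred hpred, ha, hz]
        simp [Pair.map]

theorem exists_int_eq_nums (v : K) (n : ℕ) : ∃ a : ℤ, (of v).nums n = a := by
  obtain ⟨⟨a, b⟩, h⟩ := exists_int_pair_eq_contsAux v (n + 1)
  exact ⟨a, by rw [num_eq_conts_a, nth_cont_eq_succ_nth_contAux, h]; rfl⟩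

theorem one_le_dens [IsStrictOrderedRing K] (v : K) (n : ℕ) : 1 ≤ (of v).dens n := by
  induction n with
  | zero => rw [zeroth_den_eq_one]
  | succ n ih => exact ih.trans of_den_mono

theorem exists_nat_eq_dens [IsStrictOrderedRing K] (v : K) (n : ℕ) :
    ∃ q : ℕ, 0 < q ∧ (of v).dens n = q := by
  obtain ⟨⟨a, b⟩, h⟩ := exists_int_pair_eq_contsAux v (n + 1)
  have hb : (of v).dens n = b := by rw [den_eq_conts_b, nth_cont_eq_succ_nth_contAux, h]; rfl
  have hb1 : 1 ≤ b := by exact_mod_cast hb ▸ one_le_dens v n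
  refine ⟨b.toNat, by omega, ?_⟩
  rw [hb]
  exact_mod_cast (Int.toNat_of_nonneg (by omega)).symm

theorem norm_coe_dens_mul_le (v : ℝ) {n : ℕ} (hn : ¬(of v).TerminatedAt n) :
    ‖(((of v).dens n * v : ℝ) : UnitAddCircle)‖ ≤ 1 / (of v).dens (n + 1) := by
  obtain ⟨a, ha⟩ := exists_int_eq_nums v n
  have hB : 0 < (of v).dens n := one_pos.trans_le (one_le_dens v n)
  have hB' : 0 < (of v).dens (n + 1) := one_pos.trans_le (one_le_dens v (n + 1))
  calc _ ≤ |(of v).dens n * v - a| := UnitAddCircle.norm_coe_le_abs_sub_intCast _ a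
    _ = (of v).dens n * |v - (of v).convs n| := by
        have hfactor : (of v).dens n * v - a = (of v).dens n * (v - a / (of v).dens n) := by
          field_simp
        rw [conv_eq_num_div_den, ha, hfactor, abs_mul, abs_of_pos hB]
    _ ≤ (of v).dens n * (1 / ((of v).dens n * (of v).dens (n + 1))) := by
        gcongr
        exact abs_sub_convs_le hn
    _ = 1 / (of v).dens (n + 1) := by field_simp

end GenContFract

open GenContFract in
/-- Apply the hypothesis to `q = q_n`: `a_{n+1} q_n ≤ q_{n+1}` and `‖q_n α‖ ≤ 1 / q_{n+1}`. -/
theorem cfa_le_of_one_le_mul_norm_nsmul {α K : ℝ}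
    (h : ∀ q : ℕ, 0 < q → 1 ≤ K * q * ‖q • (α : UnitAddCircle)‖) (i : ℕ) : cfa α i ≤ K := by
  have hK : 0 < K := by
    have h1 := h 1 one_pos
    rw [Nat.cast_one, mul_one, one_smul] at h1
    by_contra! hK
    nlinarith [norm_nonneg (α : UnitAddCircle)]
  set n := i - 1
  rcases hb : (of α).partDens.get? n with _ | b
  · simp [cfa, n, hb, hK.le]
  have hcfa : cfa α i = b := by simp [cfa, n, hb]
  have hterm : ¬(of α).TerminatedAt n := by simp [terminatedAt_iff_partDen_none, hb]
  obtain ⟨q, hq, hdq⟩ := exists_nat_eq_dens α n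
  have hB' : 0 < (of α).dens (n + 1) := one_pos.trans_le (one_le_dens α (n + 1))
  have hnext : (of α).dens (n + 1) ≤ K * q := by
    have hnorm := norm_coe_dens_mul_le α hterm
    rw [hdq, ← nsmul_eq_mul, AddCircle.coe_nsmul] at hnorm
    have := (h q hq).trans (mul_le_mul_of_nonneg_left hnorm (by positivity))
    rwa [mul_one_div, le_div_iff₀ hB', one_mul] at this
  have hbq := le_of_succ_get?_den hb
  rw [hdq] at hbq
  rw [hcfa]
  exact le_of_mul_le_mul_right (hbq.trans hnext) (by exact_mod_cast hq)

theorem coe_apply_eq_add {s : ℕ} {α : ℝ} {T : ℝ → ℝ} {f g : ℕ → ℕ}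
    (hT1 : ∀ j < s, ∀ x ∈ Set.Ico ((j : ℝ)) ((j : ℝ) + 1 - α),
      T x = (f j : ℝ) + α + (x - (j : ℝ)))
    (hT2 : ∀ j < s, ∀ x ∈ Set.Ico ((j : ℝ) + 1 - α) ((j : ℝ) + 1),
      T x = (g j : ℝ) + (x - ((j : ℝ) + 1 - α)))
    {x : ℝ} (hx : x ∈ Set.Ico (0 : ℝ) s) : (T x : UnitAddCircle) = x + α := by
  obtain ⟨hx0, hxs⟩ := hx
  set j := ⌊x⌋₊
  have hjs : j < s := (Nat.floor_lt hx0).mpr hxs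
  obtain ⟨m, hm⟩ : ∃ m : ℤ, T x = x + α + m := by
    rcases lt_or_ge x (j + 1 - α) with hlt | hge
    · exact ⟨(f j : ℤ) - j, by rw [hT1 j hjs x ⟨Nat.floor_le hx0, hlt⟩]; push_cast; ring⟩
    · exact ⟨(g j : ℤ) - j - 1,
        by rw [hT2 j hjs x ⟨hge, Nat.lt_floor_add_one x⟩]; push_cast; ring⟩
  simp [hm]

theorem stmt17_general (α : ℝ)
    (s : ℕ) (hs : 1 ≤ s) (T : ℝ → ℝ) (f g : ℕ → ℕ)
    (hT1 : ∀ j < s, ∀ x ∈ Set.Ico ((j : ℝ)) ((j : ℝ) + 1 - α),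
      T x = (f j : ℝ) + α + (x - (j : ℝ)))
    (hT2 : ∀ j < s, ∀ x ∈ Set.Ico ((j : ℝ) + 1 - α) ((j : ℝ) + 1),
      T x = (g j : ℝ) + (x - ((j : ℝ) + 1 - α)))
    (y : ℕ → ℝ)
    (hy : ∀ i, 1 ≤ i → y i ∈ Set.Ico (0 : ℝ) (s : ℝ))
    (horb : ∀ i, 1 ≤ i → T (y i) = y (i + 1))
    (hsuper : ∃ C > (0 : ℝ), ∀ n : ℕ, 1 ≤ n → ∀ z ∈ Set.Ico (0 : ℝ) (s : ℝ),
      ∃ i : ℕ, 1 ≤ i ∧ (i : ℝ) * Real.sqrt (1 + α ^ 2) ≤ C * n ∧ |y i - z| ≤ 1 / n) :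
    ∃ A : ℝ, ∀ i : ℕ, 1 ≤ i → cfa α i ≤ A := by
  obtain ⟨C, -, hC⟩ := hsuper
  have horbit (k : ℕ) : (y (k + 1) : UnitAddCircle) = y 1 + k • (α : UnitAddCircle) := by
    induction k with
    | zero => simp
    | succ k ih =>
      rw [← horb (k + 1) (by omega), coe_apply_eq_add hT1 hT2 (hy (k + 1) (by omega)), ih,
        succ_nsmul, add_assoc]
  have hsqrt : 1 ≤ Real.sqrt (1 + α ^ 2) :=
    Real.one_le_sqrt.mpr (le_add_of_nonneg_right (sq_nonneg α))
  refine ⟨64 * C, fun i _ => cfa_le_of_one_le_mul_norm_nsmul (fun q hq => ?_) i⟩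
  refine (UnitAddCircle.one_le_mul_norm_nsmul_of_forall_near (y 1) α hq
    (fun z => ?_)).trans_eq (by ring : 8 * (8 * C * q) * _ = _)
  obtain ⟨r, rfl⟩ := QuotientAddGroup.mk_surjective z
  obtain ⟨i, hi, hiC, hiz⟩ := hC (8 * q) (by omega) (Int.fract r)
    ⟨Int.fract_nonneg r, (Int.fract_lt_one r).trans_le (by exact_mod_cast hs)⟩
  obtain ⟨k, rfl⟩ : ∃ k, i = k + 1 := ⟨i - 1, by omega⟩
  refine ⟨k, ?_, ?_⟩
  · push_cast at hiC
    calc (k : ℝ) ≤ (k + 1) * 1 := by linarith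
      _ ≤ (k + 1) * Real.sqrt (1 + α ^ 2) := by gcongr
      _ ≤ 8 * C * q := by linarith
  · rw [← horbit, ← AddCircle.coe_fract r, ← AddCircle.coe_sub]
    refine (UnitAddCircle.norm_coe_le_abs_sub_intCast _ 0).trans ?_
    simpa using hiz

/-- Khinchin direction, easy half.  A half-infinite geodesic of slope 1/α on a finite
polysquare surface with s faces is encoded by its successive crossing points y_1, y_2, ... of
the s horizontal edges (identified with [0,s)), which form an orbit of the induced interval
exchange transformation T; consecutive crossings are a time √(1+α²) apart.  If the geodesic is
superdense — there is C > 0 such that for every n ≥ 1 its initial segment of length Cn gets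
(1/n)-close to every point — then the slope is badly approximable, i.e. the continued fraction
digits of α are bounded. -/
theorem stmt17 (α : ℝ) (hα : Irrational α) (h0 : 0 < α) (h1 : α < 1)
    (s : ℕ) (hs : 1 ≤ s) (T : ℝ → ℝ) (f g : ℕ → ℕ)
    (hf : Set.BijOn f (Set.Iio s) (Set.Iio s))
    (hg : Set.BijOn g (Set.Iio s) (Set.Iio s))
    (hT1 : ∀ j < s, ∀ x ∈ Set.Ico ((j : ℝ)) ((j : ℝ) + 1 - α),
      T x = (f j : ℝ) + α + (x - (j : ℝ)))
    (hT2 : ∀ j < s, ∀ x ∈ Set.Ico ((j : ℝ) + 1 - α) ((j : ℝ) + 1),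
      T x = (g j : ℝ) + (x - ((j : ℝ) + 1 - α)))
    (y : ℕ → ℝ)
    (hy : ∀ i, 1 ≤ i → y i ∈ Set.Ico (0 : ℝ) (s : ℝ))
    (horb : ∀ i, 1 ≤ i → T (y i) = y (i + 1))
    (hsuper : ∃ C > (0 : ℝ), ∀ n : ℕ, 1 ≤ n → ∀ z ∈ Set.Ico (0 : ℝ) (s : ℝ),
      ∃ i : ℕ, 1 ≤ i ∧ (i : ℝ) * Real.sqrt (1 + α ^ 2) ≤ C * n ∧ |y i - z| ≤ 1 / n) :
    ∃ A : ℝ, ∀ i : ℕ, 1 ≤ i → cfa α i ≤ A :=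
  stmt17_general α s hs T f g hT1 hT2 y hy horb hsuper
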